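/- For any positive integer n, n times the least common multiple of the binomial coefficients C(n-1,0), C(n-1,1), ..., C(n-1,n-1) equals the least common multiple of 1, 2, ..., n; that is, n·lcm{C(n-1,k) : 0 ≤ k ≤ n-1} = lcm(1, 2, ..., n). -/

import Mathlib

/-!
Since `n * C(n-1, k) = (k+1) * C(n, k+1)`, the left side is the lcm of `m * C(n, m)` over
`1 ≤ m ≤ n`. Each `m` divides `m * C(n, m)`, and conversely `m * C(n, m)` divides `lcm(1, …, n)`:
by Kummer's theorem the `p`-adic valuation of `C(n, m)` counts the carries when adding `m` and
`n - m` in base `p`; these occur only in positions above `v_p(m)` and at most `log_p n`, so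
`v_p(m * C(n, m)) ≤ log_p n = v_p(lcm(1, …, n))`.
-/

open Nat Finset

theorem Finset.lcm_mul_left {α β : Type*} [CommMonoidWithZero α] [StrongNormalizedGCDMonoid α]
    {s : Finset β} (hs : s.Nonempty) (f : β → α) (a : α) :
    (s.lcm fun x ↦ a * f x) = normalize a * s.lcm f := by
  induction hs using Nonempty.cons_induction with
  | singleton b => simp
  | cons b t _ _ h =>
    classical
    rw [cons_eq_insert, lcm_insert, lcm_insert, h, ← _root_.lcm_mul_left]
    exact lcm_eq_of_associated_right ((normalize_associated a).mul_right _) _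

namespace Nat

theorem factorization_mul_choose_le_log (p m n : ℕ) :
    (m * n.choose m).factorization p ≤ log p n := by
  rcases eq_or_ne m 0 with rfl | hm
  · simp
  rcases lt_or_ge n m with hnm | hmn
  · simp [choose_eq_zero_of_lt hnm]
  by_cases hp : p.Prime
  swap
  · simp [factorization_eq_zero_of_not_prime _ hp]
  have : Fact p.Prime := ⟨hp⟩
  rw [factorization_mul hm (choose_ne_zero hmn), Finsupp.add_apply, factorization_def _ hp,
    factorization_def _ hp, padicValNat_choose hmn (lt_add_one _)]
  set v := padicValNat p m
  have hv : v ≤ log p n := le_log_of_pow_le hp.one_lt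
    ((le_of_dvd (pos_of_ne_zero hm) pow_padicValNat_dvd).trans hmn)
  -- Kummer: a carry in position `i` needs `m % p ^ i ≠ 0`, i.e. `i > v`.
  have hcarries : {i ∈ Ico 1 (log p n + 1) | p ^ i ≤ m % p ^ i + (n - m) % p ^ i}
      ⊆ Ico (v + 1) (log p n + 1) := by
    intro i hi
    simp only [mem_filter, mem_Ico] at hi ⊢
    refine ⟨?_, hi.1.2⟩
    by_contra! hiv
    have : m % p ^ i = 0 :=
      mod_eq_zero_of_dvd ((pow_dvd_pow p (by omega)).trans pow_padicValNat_dvd)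
    have := mod_lt (n - m) (pow_pos hp.pos i)
    omega
  have := card_le_card hcarries
  rw [card_Ico] at this
  omega

theorem mul_choose_dvd_lcmUpto {m n : ℕ} (hm : m ≠ 0) (hmn : m ≤ n) :
    m * n.choose m ∣ lcmUpto n := by
  rw [← factorization_prime_le_iff_dvd (mul_ne_zero hm (choose_ne_zero hmn)) (lcmUpto_ne_zero n)]
  intro p hp
  rw [factorization_lcmUpto n hp]
  exact factorization_mul_choose_le_log p m n

theorem lcmUpto_eq_lcm_mul_choose (n : ℕ) : lcmUpto n = (Icc 1 n).lcm fun m ↦ m * n.choose m :=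
  dvd_antisymm (Finset.lcm_dvd fun m hm ↦ (dvd_mul_right m _).trans (dvd_lcm hm))
    (Finset.lcm_dvd fun m hm ↦ by
      rw [mem_Icc] at hm
      exact mul_choose_dvd_lcmUpto (by omega) hm.2)

end Nat

theorem farhi_identity_rewritten (n : ℕ) (hn : 0 < n) :
    n * (Finset.range n).lcm (n - 1).choose = (Finset.Icc 1 n).lcm id := by
  obtain ⟨n, rfl⟩ := exists_add_one_eq.mpr hn
  have hmul := Finset.lcm_mul_left (nonempty_range_add_one (n := n)) n.choose (n + 1)
  rw [normalize_eq] at hmul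
  rw [Nat.add_sub_cancel, ← hmul, ← lcmUpto, lcmUpto_eq_lcm_mul_choose, range_succ_eq_Icc_zero,
    ← zero_add 1, ← image_add_right_Icc, lcm_image]
  exact lcm_congr rfl fun k _ ↦ (add_one_mul_choose_eq n k).trans (mul_comm _ _)
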